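/- Let ω = (ρ, θ, ρ̃, θ̃, ι), let k ≥ 0, let (l_i, j_i) ∈ ℤ² ∖ {(0,0)} for 0 ≤ i ≤ 2k+1, let l_{2k+2} ∈ ℤ, and let (M_i)_{i=0}^{2k+2} and (M'_i)_{i=0}^{2k+2} be sequences in ℤ* such that all indices M_i − j_i and M'_i − j_i occurring below lie in ℤ*. Assume: (a) ι(v_{M_{2i}−j_{2i}}) = ṽ_{M_{2i+1}}^{−l_{2i+1}} and ι(v_{M'_{2i}−j_{2i}}) = ṽ_{M'_{2i+1}}^{−l_{2i+1}} for 0 ≤ i ≤ k; (b) ι(v_{M_{2i+2}}^{−l_{2i+2}}) = ṽ_{M_{2i+1}−j_{2i+1}} and ι(v_{M'_{2i+2}}^{−l_{2i+2}}) = ṽ_{M'_{2i+1}−j_{2i+1}} for 0 ≤ i ≤ k; (c) ρ(M_i − j_i) = ρ(M_i) − j_i and ρ(M'_i − j_i) = ρ(M'_i) − j_i for 0 ≤ i ≤ 2k+1; (d) ρ̃(M_i − j_i) = ρ̃(M_i) − j_i and ρ̃(M'_i − j_i) = ρ̃(M'_i) − j_i for 0 ≤ i ≤ 2k+1. Then for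 every −1 ≤ i ≤ k, setting g_{−1} = 1 and g_i = c_{l_0,j_0} c̃_{l_1,j_1} ⋯ c_{l_{2i},j_{2i}} c̃_{l_{2i+1},j_{2i+1}} for i ≥ 0, one has g_i^{-1} d_{M_0,M'_0}^{-l_0} g_i = d_{M_{2i+2},M'_{2i+2}}^{-l_{2i+2}} in G(ω). -/
import Mathlib


/-- `ℤ* = ℤ \ {0}`. -/
abbrev Zstar : Type := {n : ℤ // n ≠ 0}

/-- Index set for the free basis `S` (and `S̃`): `(j, l, b)` with `b = false` for `v_j^l`
and `b = true` for `w_j^l`. -/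
abbrev SIdx : Type := Zstar × ℤ × Bool

/-- The free group on three generators `x, y, z`. -/
abbrev F3 : Type := FreeGroup (Fin 3)

/-- The generator `x`. -/
def gx : F3 := FreeGroup.of 0
/-- The generator `y`. -/
def gy : F3 := FreeGroup.of 1
/-- The generator `z`. -/
def gz : F3 := FreeGroup.of 2

/-- `v_j^l = z^{-l} x^j y^{-ρ(j)} z^l`. -/
def vgen (ρ : Equiv.Perm Zstar) (j : Zstar) (l : ℤ) : F3 :=
  gz ^ (-l) * gx ^ j.val * gy ^ (-(ρ j).val) * gz ^ l

/-- `w_j^l = z^{-l} x^j z y^{-θ(j)} z^l`. -/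
def wgen (θ : Equiv.Perm Zstar) (j : Zstar) (l : ℤ) : F3 :=
  gz ^ (-l) * gx ^ j.val * gz * gy ^ (-(θ j).val) * gz ^ l

/-- The element of `S` indexed by `(j, l, b)`. -/
def sElem (ρ θ : Equiv.Perm Zstar) (p : SIdx) : F3 :=
  if p.2.2 then wgen θ p.1 p.2.1 else vgen ρ p.1 p.2.1

/-- The canonical homomorphism from the free group on the index set of `S` to `F`,
sending `(j,l,false) ↦ v_j^l` and `(j,l,true) ↦ w_j^l`. -/
def sMap (ρ θ : Equiv.Perm Zstar) : FreeGroup SIdx →* F3 :=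
  FreeGroup.lift (sElem ρ θ)

/-- `H = ⟨S⟩ ≤ F`. -/
def Hsub (ρ θ : Equiv.Perm Zstar) : Subgroup F3 :=
  Subgroup.closure (Set.range (sElem ρ θ))

/-- The tuple `ω = (ρ, θ, ρ̃, θ̃, ι)`; the bijection `ι : S → S̃` is recorded as a bijection
of the index sets. -/
structure OmegaTuple : Type where
  ρ : Equiv.Perm Zstar
  θ : Equiv.Perm Zstar
  ρt : Equiv.Perm Zstar
  θt : Equiv.Perm Zstar
  ι : SIdx ≃ SIdx

/-- The two maps from the abstract copy of `H` (the free group on the index set of `S`)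
into the two copies of `F₃`: into `F` via `S`, and into `F̃` via `ι` followed by `S̃`. -/
def pushMaps (ω : OmegaTuple) : Bool → (FreeGroup SIdx →* F3) :=
  fun b => if b then (sMap ω.ρt ω.θt).comp (FreeGroup.map ω.ι) else sMap ω.ρ ω.θ

/-- `G(ω) = F *_{H = H̃} F̃`, the amalgamated product. -/
def GroupOmega (ω : OmegaTuple) : Type := Monoid.PushoutI (pushMaps ω)

instance (ω : OmegaTuple) : Group (GroupOmega ω) := by
  delta GroupOmega; infer_instance

/-- The canonical map `F → G(ω)`. -/
def ofb (ω : OmegaTuple) : F3 →* GroupOmega ω := Monoid.PushoutI.of (φ := pushMaps ω) false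

/-- The canonical map `F̃ → G(ω)`. -/
def oft (ω : OmegaTuple) : F3 →* GroupOmega ω := Monoid.PushoutI.of (φ := pushMaps ω) true

/-- `c_{l,j} = z^l x^j`. -/
def cElem (l j : ℤ) : F3 := gz ^ l * gx ^ j

/-- `d_{M,M'}^l = v_M^l (v_{M'}^l)⁻¹`. -/
def dElem (ρ : Equiv.Perm Zstar) (M M' : Zstar) (l : ℤ) : F3 :=
  vgen ρ M l * (vgen ρ M' l)⁻¹

/-- The index `(j,l,b)` corresponds to an element of `S_N` (resp. `S̃_N`):
`j ∈ [-N,N] ∩ ℤ*` and `l ∈ [-N,N]`. -/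
def InSN (N : ℤ) (p : SIdx) : Prop :=
  p.1.val ∈ Set.Icc (-N) N ∧ p.2.1 ∈ Set.Icc (-N) N

/-- A (total) map `g` extends a partial bijection `f`. -/
def Extends {α β : Type*} (g : α → β) (f : PartialEquiv α β) : Prop :=
  ∀ a ∈ f.source, g a = f a

/-- A partial bijection of `ℤ*` is independent from `[-N, N]`: its domain and image
are disjoint from `[-N, N]`. -/
def IndepFromIcc (f : PartialEquiv Zstar Zstar) (N : ℤ) : Prop :=
  (∀ a ∈ f.source, a.val ∉ Set.Icc (-N) N) ∧ (∀ a ∈ f.target, a.val ∉ Set.Icc (-N) N)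

/-- A partial bijection of the index set is independent from `(S_N, S̃_N)`:
its domain misses `S_N` and its image misses `S̃_N`. -/
def IndepFromSN (f : PartialEquiv SIdx SIdx) (N : ℤ) : Prop :=
  (∀ p ∈ f.source, ¬ InSN N p) ∧ (∀ p ∈ f.target, ¬ InSN N p)

/-- Conjugation of `d_{M,M'}^{-l}` by `c_{l,j}` in the free group. -/
lemma conj_dElem (ρ : Equiv.Perm Zstar) (M M' Mmj M'mj : Zstar) (l j : ℤ)
    (h1 : Mmj.val = M.val - j) (h2 : M'mj.val = M'.val - j)
    (h3 : (ρ Mmj).val = (ρ M).val - j) (h4 : (ρ M'mj).val = (ρ M').val - j) :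
    (cElem l j)⁻¹ * dElem ρ M M' (-l) * cElem l j = dElem ρ Mmj M'mj 0 := by
  unfold cElem dElem vgen
  rw [h1, h2, h3, h4]
  group

/-- The defining relation of the amalgamated product on the generators of `H`. -/
lemma push_eq (ω : OmegaTuple) (p : SIdx) :
    ofb ω (sElem ω.ρ ω.θ p) = oft ω (sElem ω.ρt ω.θt (ω.ι p)) := by
  have h1 := Monoid.PushoutI.of_apply_eq_base (φ := pushMaps ω) false (FreeGroup.of p)
  have h2 := Monoid.PushoutI.of_apply_eq_base (φ := pushMaps ω) true (FreeGroup.of p)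
  rw [show pushMaps ω false = sMap ω.ρ ω.θ from rfl] at h1
  rw [show pushMaps ω true = (sMap ω.ρt ω.θt).comp (FreeGroup.map ω.ι) from rfl] at h2
  simp only [sMap, MonoidHom.comp_apply, FreeGroup.map.of, FreeGroup.lift_apply_of] at h1 h2
  rw [ofb, oft]
  exact h1.trans h2.symm

lemma ofb_vgen (ω : OmegaTuple) {j j' : Zstar} {l l' : ℤ}
    (h : ω.ι (j, l, false) = (j', l', false)) :
    ofb ω (vgen ω.ρ j l) = oft ω (vgen ω.ρt j' l') := by
  have := push_eq ω (j, l, false)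
  rw [h] at this
  simpa [sElem] using this

lemma ofb_dElem (ω : OmegaTuple) {M M' N N' : Zstar} {l l' : ℤ}
    (h : ω.ι (M, l, false) = (N, l', false)) (h' : ω.ι (M', l, false) = (N', l', false)) :
    ofb ω (dElem ω.ρ M M' l) = oft ω (dElem ω.ρt N N' l') := by
  simp only [dElem, map_mul, map_inv, ofb_vgen ω h, ofb_vgen ω h']

/-- the Claim: under conditions (a)-(d), for every `-1 ≤ i ≤ k` one has
`g_i⁻¹ d_{M_0,M'_0}^{-l_0} g_i = d_{M_{2i+2},M'_{2i+2}}^{-l_{2i+2}}` in `G(ω)`.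
Here the index is shifted by one: `gprod 0 = 1` plays the role of `g_{-1}` and
`gprod (i+1) = c_{l_0,j_0} c̃_{l_1,j_1} ⋯ c_{l_{2i},j_{2i}} c̃_{l_{2i+1},j_{2i+1}}` that of
`g_i`, so the conclusion is stated for all `0 ≤ i ≤ k + 1`.
The values `M_i - j_i` (resp. `M'_i - j_i`) in `ℤ*` are recorded by the functions
`Mmj` (resp. `M'mj`). -/
theorem stmt11 (ω : OmegaTuple) (k : ℕ) (l j : ℕ → ℤ)
    (hlj : ∀ i ≤ 2 * k + 1, (l i, j i) ≠ (0, 0))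
    (M M' Mmj M'mj : ℕ → Zstar)
    (hMmj : ∀ i ≤ 2 * k + 1, (Mmj i).val = (M i).val - j i)
    (hM'mj : ∀ i ≤ 2 * k + 1, (M'mj i).val = (M' i).val - j i)
    -- (a)
    (ha : ∀ i ≤ k,
      ω.ι (Mmj (2 * i), 0, false) = (M (2 * i + 1), -l (2 * i + 1), false) ∧
      ω.ι (M'mj (2 * i), 0, false) = (M' (2 * i + 1), -l (2 * i + 1), false))
    -- (b)
    (hb : ∀ i ≤ k,
      ω.ι (M (2 * i + 2), -l (2 * i + 2), false) = (Mmj (2 * i + 1), 0, false) ∧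
      ω.ι (M' (2 * i + 2), -l (2 * i + 2), false) = (M'mj (2 * i + 1), 0, false))
    -- (c)
    (hc : ∀ i ≤ 2 * k + 1,
      (ω.ρ (Mmj i)).val = (ω.ρ (M i)).val - j i ∧
      (ω.ρ (M'mj i)).val = (ω.ρ (M' i)).val - j i)
    -- (d)
    (hd : ∀ i ≤ 2 * k + 1,
      (ω.ρt (Mmj i)).val = (ω.ρt (M i)).val - j i ∧
      (ω.ρt (M'mj i)).val = (ω.ρt (M' i)).val - j i) :
    ∀ i ≤ k + 1,
      (((List.range i).map fun m =>
          ofb ω (cElem (l (2 * m)) (j (2 * m))) *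
            oft ω (cElem (l (2 * m + 1)) (j (2 * m + 1)))).prod)⁻¹ *
          ofb ω (dElem ω.ρ (M 0) (M' 0) (-l 0)) *
          ((List.range i).map fun m =>
            ofb ω (cElem (l (2 * m)) (j (2 * m))) *
              oft ω (cElem (l (2 * m + 1)) (j (2 * m + 1)))).prod =
        ofb ω (dElem ω.ρ (M (2 * i)) (M' (2 * i)) (-l (2 * i))) := by
  intro i hi
  induction i with
  | zero => simp
  | succ i ih =>
    have hik : i ≤ k := by omega
    have hih := ih (by omega)
    have h2 : 2 * i ≤ 2 * k + 1 := by omega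
    have h2' : 2 * i + 1 ≤ 2 * k + 1 := by omega
    set t1 := ofb ω (cElem (l (2 * i)) (j (2 * i))) with ht1
    set t2 := oft ω (cElem (l (2 * i + 1)) (j (2 * i + 1))) with ht2
    set g := ((List.range i).map fun m =>
        ofb ω (cElem (l (2 * m)) (j (2 * m))) *
          oft ω (cElem (l (2 * m + 1)) (j (2 * m + 1)))).prod with hg
    have e1 : t1⁻¹ * ofb ω (dElem ω.ρ (M (2 * i)) (M' (2 * i)) (-l (2 * i))) * t1 =
        oft ω (dElem ω.ρt (M (2 * i + 1)) (M' (2 * i + 1)) (-l (2 * i + 1))) := by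
      rw [ht1, ← map_inv, ← map_mul, ← map_mul,
        conj_dElem ω.ρ _ _ _ _ _ _ (hMmj _ h2) (hM'mj _ h2) (hc _ h2).1 (hc _ h2).2]
      exact ofb_dElem ω (ha i hik).1 (ha i hik).2
    have e2 : t2⁻¹ * oft ω (dElem ω.ρt (M (2 * i + 1)) (M' (2 * i + 1)) (-l (2 * i + 1))) * t2 =
        ofb ω (dElem ω.ρ (M (2 * i + 2)) (M' (2 * i + 2)) (-l (2 * i + 2))) := by
      rw [ht2, ← map_inv, ← map_mul, ← map_mul,
        conj_dElem ω.ρt _ _ _ _ _ _ (hMmj _ h2') (hM'mj _ h2') (hd _ h2').1 (hd _ h2').2]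
      exact (ofb_dElem ω (hb i hik).1 (hb i hik).2).symm
    rw [List.range_succ, List.map_append, List.prod_append, List.map_singleton,
      List.prod_singleton]
    rw [show 2 * (i + 1) = 2 * i + 2 by ring]
    calc (g * (t1 * t2))⁻¹ * ofb ω (dElem ω.ρ (M 0) (M' 0) (-l 0)) * (g * (t1 * t2))
        = t2⁻¹ * (t1⁻¹ * (g⁻¹ * ofb ω (dElem ω.ρ (M 0) (M' 0) (-l 0)) * g) * t1) * t2 := by
          group
      _ = t2⁻¹ * (t1⁻¹ * ofb ω (dElem ω.ρ (M (2 * i)) (M' (2 * i)) (-l (2 * i))) * t1) * t2 := by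
          rw [hih]
      _ = ofb ω (dElem ω.ρ (M (2 * i + 2)) (M' (2 * i + 2)) (-l (2 * i + 2))) := by
          rw [e1, e2]
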